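/- arXiv:2104.05905 — 4 statements merged into one kernel-verified Lean document; each statement's English description precedes it below -/
import Mathlib

section
/- Assume condition A3 and let g* : S × {1, …, m} → ℝ be any bounded measurable function. Then E[ 1{C = c, A = a} · e_a(X, C)^{-1} · (Y − g*(X, C)) + 1{C = c} · g*(X, C) ] = P[C = c] · φ(c, a). Consequently, the asymptotic limit of the augmented estimator for φ(c, a) equals φ(c, a) even when the limit g* of the outcome-model estimator differs from the true conditional mean g_a; the analysis is robust to outcome-model misspecification. -/
/-!
Write `π = P(A = a | X, C)` and `ν = E[1{A = a} Y | X, C]`. Conditioning the inverse-weighted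
term on `(X, C)` turns it into `1{C = c} (ν / π - g*(X, C))`, so the augmentation term cancels
`g*` and the left side is `E[1{C = c} ν / π]` whatever `g*` is.

On the event `{A = a}` the σ-algebra of `(X, C, A)` carries no more information than that of
`(X, C)`, which gives `π E[Y | X, C, A] = ν` there, hence `g_a(X, C) = ν / π` a.s. on `{A = a}`.
Positivity removes the restriction to `{A = a}`: disintegrating `P` along `(X, C)`, a fibre on
which the identity fails must give `{A = a}` conditional mass zero. The disintegration is needed
because `g` is an arbitrary function, so `{g_a ≠ ν / π}` need not be measurable.
-/

open MeasureTheory ProbabilityTheory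

lemma Set.indicator_one_mul_eq_indicator {Ω : Type*} (t : Set Ω) (g : Ω → ℝ) :
    (fun ω => t.indicator (fun _ => (1 : ℝ)) ω * g ω) = t.indicator g := by
  funext ω
  by_cases hω : ω ∈ t <;> simp [hω]

section CondExp

variable {Ω : Type*} {m mΩ : MeasurableSpace Ω} {μ : Measure Ω}

lemma ae_norm_condExp_indicator_one_le (t : Set Ω) : ∀ᵐ ω ∂μ, ‖(μ⟦t | m⟧) ω‖ ≤ 1 := by
  refine ae_bdd_abs_condExp_of_ae_bdd_abs (Filter.Eventually.of_forall fun ω => ?_)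
  by_cases hω : ω ∈ t <;> simp [hω]

lemma integrable_condExp_indicator_one_mul (t : Set Ω) {V : Ω → ℝ} (hV : Integrable V μ) :
    Integrable (fun ω => (μ⟦t | m⟧) ω * V ω) μ :=
  hV.bdd_mul integrable_condExp.aestronglyMeasurable (ae_norm_condExp_indicator_one_le t)

theorem condExp_inter_indicator_mul_inv_mul {s T : Set Ω}
    (hs : MeasurableSet[m] s) (hT : MeasurableSet T) {Z : Ω → ℝ} (hZ : Integrable Z μ)
    (hint : Integrable (fun ω => (s ∩ T).indicator (fun _ => (1 : ℝ)) ω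
      * ((μ⟦T | m⟧) ω)⁻¹ * Z ω) μ) :
    μ[fun ω => (s ∩ T).indicator (fun _ => (1 : ℝ)) ω * ((μ⟦T | m⟧) ω)⁻¹ * Z ω | m]
      =ᵐ[μ] s.indicator fun ω => (μ[T.indicator Z | m]) ω / (μ⟦T | m⟧) ω := by
  have hsplit : (fun ω => (s ∩ T).indicator (fun _ => (1 : ℝ)) ω * ((μ⟦T | m⟧) ω)⁻¹ * Z ω)
      = s.indicator (fun ω => ((μ⟦T | m⟧) ω)⁻¹) * T.indicator Z := by
    funext ω
    by_cases hωs : ω ∈ s <;> by_cases hωT : ω ∈ T <;> simp [hωs, hωT]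
  have hinv : StronglyMeasurable[m] (s.indicator fun ω => ((μ⟦T | m⟧) ω)⁻¹) :=
    (stronglyMeasurable_condExp.measurable.inv.indicator hs).stronglyMeasurable
  rw [hsplit] at hint ⊢
  filter_upwards [condExp_mul_of_stronglyMeasurable_left hinv hint (hZ.indicator hT)] with ω hω
  rw [hω]
  by_cases hωs : ω ∈ s <;> simp [hωs, div_eq_inv_mul]

variable [IsFiniteMeasure μ]

theorem condExp_indicator_sub_of_stronglyMeasurable {T : Set Ω} (hT : MeasurableSet T)
    {Y b : Ω → ℝ} (hY : Integrable Y μ) (hb : StronglyMeasurable[m] b) (hb_int : Integrable b μ) :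
    μ[T.indicator (fun ω => Y ω - b ω) | m] =ᵐ[μ] μ[T.indicator Y | m] - b * μ⟦T | m⟧ := by
  have hbT : b * T.indicator (fun _ => (1 : ℝ)) = T.indicator b := by
    rw [← T.indicator_one_mul_eq_indicator b]
    funext ω
    exact mul_comm _ _
  have hsplit : T.indicator (fun ω => Y ω - b ω)
      = T.indicator Y - b * T.indicator (fun _ => (1 : ℝ)) := by
    rw [hbT]
    funext ω
    by_cases hωT : ω ∈ T <;> simp [hωT]
  rw [hsplit]
  refine (condExp_sub (hY.indicator hT) (hbT ▸ hb_int.indicator hT) m).trans ?_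
  filter_upwards [condExp_mul_of_stronglyMeasurable_left hb (hbT ▸ hb_int.indicator hT)
    ((integrable_const 1).indicator hT)] with ω hω
  simp only [Pi.sub_apply, hω]

theorem integral_augmented_ipw_eq_setIntegral_condExp_div (hm : m ≤ mΩ) {s T : Set Ω}
    (hs : MeasurableSet[m] s) (hT : MeasurableSet T) {Y b : Ω → ℝ} (hY : Integrable Y μ)
    (hb : StronglyMeasurable[m] b) (hb_int : Integrable b μ) (hpos : ∀ᵐ ω ∂μ, 0 < (μ⟦T | m⟧) ω)
    (hint : Integrable (fun ω => (s ∩ T).indicator (fun _ => (1 : ℝ)) ω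
      * ((μ⟦T | m⟧) ω)⁻¹ * (Y ω - b ω)) μ) :
    ∫ ω, ((s ∩ T).indicator (fun _ => (1 : ℝ)) ω * ((μ⟦T | m⟧) ω)⁻¹ * (Y ω - b ω)
        + s.indicator (fun _ => (1 : ℝ)) ω * b ω) ∂μ
      = ∫ ω in s, (μ[T.indicator Y | m]) ω / (μ⟦T | m⟧) ω ∂μ := by
  have hs' : MeasurableSet[mΩ] s := hm s hs
  have hipw : μ[fun ω => (s ∩ T).indicator (fun _ => (1 : ℝ)) ω * ((μ⟦T | m⟧) ω)⁻¹
        * (Y ω - b ω) | m]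
      =ᵐ[μ] s.indicator fun ω => (μ[T.indicator Y | m]) ω / (μ⟦T | m⟧) ω - b ω := by
    refine (condExp_inter_indicator_mul_inv_mul (Z := fun ω => Y ω - b ω) hs hT
      (hY.sub hb_int) hint).trans ?_
    filter_upwards [condExp_indicator_sub_of_stronglyMeasurable hT hY hb hb_int, hpos]
      with ω hω hπ
    by_cases hωs : ω ∈ s
    · rw [Set.indicator_of_mem hωs, Set.indicator_of_mem hωs, hω, Pi.sub_apply, Pi.mul_apply]
      field_simp
    · simp [hωs]
  have hdiff_int : IntegrableOn
      (fun ω => (μ[T.indicator Y | m]) ω / (μ⟦T | m⟧) ω - b ω) s μ :=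
    (integrable_indicator_iff hs').mp (integrable_condExp.congr hipw)
  rw [integral_add hint (s.indicator_one_mul_eq_indicator b ▸ hb_int.indicator hs'),
    ← integral_condExp hm, integral_congr_ae hipw, s.indicator_one_mul_eq_indicator,
    integral_indicator hs', integral_indicator hs', ← integral_add hdiff_int hb_int.integrableOn]
  simp only [sub_add_cancel]

theorem setIntegral_inter_condExp (hm : m ≤ mΩ) {s t : Set Ω} (hs : MeasurableSet[m] s)
    (ht : MeasurableSet t) {V : Ω → ℝ} (hV : Integrable V μ) :
    ∫ ω in s ∩ t, (μ[V | m]) ω ∂μ = ∫ ω in s, (μ⟦t | m⟧) ω * V ω ∂μ := by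
  have hπV := integrable_condExp_indicator_one_mul (m := m) t hV
  calc ∫ ω in s ∩ t, (μ[V | m]) ω ∂μ
      = ∫ ω in s, (μ[t.indicator (fun _ => (1 : ℝ)) * μ[V | m] | m]) ω ∂μ := by
        rw [← setIntegral_indicator ht, Pi.mul_def, t.indicator_one_mul_eq_indicator,
          setIntegral_condExp hm (integrable_condExp.indicator ht) hs]
    _ = ∫ ω in s, (μ⟦t | m⟧) ω * (μ[V | m]) ω ∂μ := by
        refine setIntegral_congr_ae (hm s hs) ((condExp_mul_of_stronglyMeasurable_right
          stronglyMeasurable_condExp ?_ ((integrable_const 1).indicator ht)).mono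
          fun ω hω _ => hω)
        rw [Pi.mul_def, t.indicator_one_mul_eq_indicator]
        exact integrable_condExp.indicator ht
    _ = ∫ ω in s, (μ[μ⟦t | m⟧ * V | m]) ω ∂μ :=
        setIntegral_congr_ae (hm s hs) <| (condExp_mul_of_stronglyMeasurable_left
          stronglyMeasurable_condExp hπV hV).mono fun ω hω _ => hω.symm
    _ = ∫ ω in s, (μ⟦t | m⟧) ω * V ω ∂μ := setIntegral_condExp hm hπV hs

theorem ae_condExp_indicator_one_mul_condExp_eq {m₂ m₃ : MeasurableSpace Ω}
    (hm₂₃ : m₂ ≤ m₃) (hm₃ : m₃ ≤ mΩ) {T : Set Ω} (hT : MeasurableSet[m₃] T)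
    (htrace : ∀ B, MeasurableSet[m₃] B → ∃ B', MeasurableSet[m₂] B' ∧ B ∩ T = B' ∩ T)
    {Y : Ω → ℝ} (hY : Integrable Y μ) :
    ∀ᵐ ω ∂μ, ω ∈ T → (μ⟦T | m₂⟧) ω * (μ[Y | m₃]) ω = (μ[T.indicator Y | m₂]) ω := by
  have hT' : MeasurableSet[mΩ] T := hm₃ T hT
  have hπY := integrable_condExp_indicator_one_mul (m := m₂) T hY
  have hν : T.indicator (μ[T.indicator Y | m₂]) =ᵐ[μ]
      μ[T.indicator (fun ω => (μ⟦T | m₂⟧) ω * Y ω) | m₃] := by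
    refine ae_eq_condExp_of_forall_setIntegral_eq hm₃ (hπY.indicator hT')
      (fun _ _ _ => (integrable_condExp.indicator hT').integrableOn) (fun B hB _ => ?_)
      ((stronglyMeasurable_condExp.mono hm₂₃).indicator hT).aestronglyMeasurable
    obtain ⟨B', hB', hBT⟩ := htrace B hB
    rw [setIntegral_indicator hT', setIntegral_indicator hT', hBT,
      setIntegral_inter_condExp (hm₂₃.trans hm₃) hB' hT' (hY.indicator hT'),
      ← setIntegral_indicator hT']
    simp_rw [Set.indicator_mul_right]
  have hπG : μ[T.indicator (fun ω => (μ⟦T | m₂⟧) ω * Y ω) | m₃] =ᵐ[μ]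
      T.indicator (fun ω => (μ⟦T | m₂⟧) ω * (μ[Y | m₃]) ω) :=
    (condExp_indicator hπY hT).trans <| (condExp_mul_of_stronglyMeasurable_left
      (stronglyMeasurable_condExp.mono hm₂₃) hπY hY).mono fun ω hω => by
        by_cases hωT : ω ∈ T
        · simp only [Set.indicator_of_mem hωT]
          exact hω
        · simp [hωT]
  filter_upwards [hν, hπG] with ω hν hπG hω
  simpa [hω] using (hν.trans hπG).symm

end CondExp

theorem ae_comp_of_ae_mem_imp_of_condExp_pos {Ω β : Type*} [mΩ : MeasurableSpace Ω]
    [StandardBorelSpace Ω] [Nonempty Ω] [mβ : MeasurableSpace β] [MeasurableEq β]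
    {P : Measure Ω} [IsFiniteMeasure P] {f : Ω → β} (hf : Measurable f) {T : Set Ω}
    (hT : MeasurableSet T) (hpos : ∀ᵐ ω ∂P, 0 < (P⟦T | mβ.comap f⟧) ω)
    {p : β → Prop} (hp : ∀ᵐ ω ∂P, ω ∈ T → p (f ω)) :
    ∀ᵐ ω ∂P, p (f ω) := by
  set κ := condDistrib id f P
  have hgraph : MeasurableEmbedding fun ω => (f ω, ω) := by
    refine .of_measurable_inverse (hf.prodMk measurable_id) ?_ measurable_snd fun _ => rfl
    have : Set.range (fun ω => (f ω, ω)) = {x : β × Ω | f x.2 = x.1} := by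
      ext ⟨ξ, ω⟩
      simp [eq_comm]
    exact this ▸ measurableSet_eq_fun (hf.comp measurable_snd) measurable_fst
  -- `p` need not be measurable: the graph embedding transports `hp` to the joint law of `(f, id)`.
  have hp_fiber : ∀ᵐ ξ ∂P.map f, ∀ᵐ ω ∂κ ξ, ω ∈ T → p ξ := by
    refine Measure.ae_ae_of_ae_compProd (p := fun x => x.2 ∈ T → p x.1) ?_
    rw [compProd_map_condDistrib measurable_id.aemeasurable]
    exact hgraph.ae_map_iff.mpr hp
  have hκ_pos : ∀ᵐ ξ ∂P.map f, κ ξ T ≠ 0 := by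
    refine (ae_map_iff hf.aemeasurable (Kernel.measurable_coe κ hT
      (measurableSet_singleton 0)).compl).mpr ?_
    filter_upwards [hpos, condDistrib_ae_eq_condExp hf measurable_id hT]
      with ω hω hκ (hκ0 : condDistrib id f P (f ω) T = 0)
    rw [Set.preimage_id, measureReal_def, hκ0, ENNReal.toReal_zero] at hκ
    exact hω.ne hκ
  refine ae_of_ae_map hf.aemeasurable ?_
  filter_upwards [hp_fiber, hκ_pos] with ξ hξ hκξ
  by_contra hnp
  exact hκξ (measure_eq_zero_iff_ae_notMem.mpr (hξ.mono fun ω h hωT => hnp (h hωT)))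

section Triple

variable {Ω S F G : Type*} [MeasurableSpace S] [MeasurableSpace F]
  [MeasurableSpace G] {X : Ω → S} {C : Ω → F} {A : Ω → G}

lemma measurableSet_comap_prodMk_prodMk_eq [MeasurableSingletonClass G] (a : G) :
    MeasurableSet[MeasurableSpace.comap (fun ω => (X ω, C ω, A ω)) inferInstance]
      {ω | A ω = a} :=
  (measurable_snd.comp (measurable_snd.comp (comap_measurable _)))
    (measurableSet_singleton a)

lemma exists_inter_eq_of_measurableSet_comap_prodMk_prodMk (a : G) {B : Set Ω}
    (hB : MeasurableSet[MeasurableSpace.comap (fun ω => (X ω, C ω, A ω)) inferInstance] B) :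
    ∃ B', MeasurableSet[MeasurableSpace.comap (fun ω => (X ω, C ω)) inferInstance] B'
      ∧ B ∩ {ω | A ω = a} = B' ∩ {ω | A ω = a} := by
  obtain ⟨M, hM, rfl⟩ := hB
  refine ⟨_, ⟨(fun ξ : S × F => (ξ.1, ξ.2, a)) ⁻¹' M, (by fun_prop : Measurable _) hM, rfl⟩, ?_⟩
  ext ω
  simp only [Set.mem_inter_iff, Set.mem_preimage, Set.mem_ofPred_eq]
  constructor <;> rintro ⟨hω, rfl⟩ <;> exact ⟨hω, rfl⟩

theorem ae_eq_condExp_indicator_div_of_condExp_pos [mΩ : MeasurableSpace Ω]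
    [StandardBorelSpace Ω] [Nonempty Ω] [MeasurableEq (S × F)] [MeasurableSingletonClass G]
    {P : Measure Ω} [IsFiniteMeasure P]
    (hX : Measurable X) (hC : Measurable C) (hA : Measurable A) {Y : Ω → ℝ}
    (hY : Integrable Y P) {g : S → F → G → ℝ}
    (hg : (fun ω => g (X ω) (C ω) (A ω))
      =ᵐ[P] P[Y | MeasurableSpace.comap (fun ω => (X ω, C ω, A ω)) inferInstance])
    (a : G)
    (hpos : ∀ᵐ ω ∂P, 0 <
      (P⟦{ω | A ω = a} | MeasurableSpace.comap (fun ω => (X ω, C ω)) inferInstance⟧) ω) :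
    (fun ω => g (X ω) (C ω) a) =ᵐ[P] fun ω =>
      (P[{ω | A ω = a}.indicator Y | MeasurableSpace.comap (fun ω => (X ω, C ω)) inferInstance]) ω
        / (P⟦{ω | A ω = a} | MeasurableSpace.comap (fun ω => (X ω, C ω)) inferInstance⟧) ω := by
  set m₂ := MeasurableSpace.comap (fun ω => (X ω, C ω)) (inferInstance : MeasurableSpace (S × F))
  set m₃ := MeasurableSpace.comap (fun ω => (X ω, C ω, A ω))
    (inferInstance : MeasurableSpace (S × F × G))
  set T := {ω | A ω = a}
  have hm₂₃ : m₂ ≤ m₃ := MeasurableSpace.comap_le_comap_of_eq_comp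
    (fun q : S × F × G => (q.1, q.2.1)) (by fun_prop) rfl
  obtain ⟨h, -, hh⟩ : ∃ h : S × F → ℝ, Measurable h ∧
      (fun ω => (P[T.indicator Y | m₂]) ω / (P⟦T | m₂⟧) ω) = h ∘ fun ω => (X ω, C ω) :=
    Measurable.exists_eq_measurable_comp
      (stronglyMeasurable_condExp.measurable.div stronglyMeasurable_condExp.measurable)
  have hon : ∀ᵐ ω ∂P, ω ∈ T → g (X ω) (C ω) a = h (X ω, C ω) := by
    filter_upwards [ae_condExp_indicator_one_mul_condExp_eq hm₂₃
      (hX.prodMk (hC.prodMk hA)).comap_le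
      (measurableSet_comap_prodMk_prodMk_eq a)
      (fun _ => exists_inter_eq_of_measurableSet_comap_prodMk_prodMk a) hY, hg, hpos]
      with ω hid hgω hπ (hωa : A ω = a)
    calc g (X ω) (C ω) a = (P[Y | m₃]) ω := hωa ▸ hgω
      _ = (P[T.indicator Y | m₂]) ω / (P⟦T | m₂⟧) ω := by
          rw [← hid hωa]
          exact (mul_div_cancel_left₀ _ hπ.ne').symm
      _ = h (X ω, C ω) := congrFun hh ω
  have hT : MeasurableSet[mΩ] T := hA (measurableSet_singleton a)
  rw [hh]
  exact ae_comp_of_ae_mem_imp_of_condExp_pos (mΩ := mΩ) (p := fun ξ => g ξ.1 ξ.2 a = h ξ)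
    (hX.prodMk hC) hT hpos hon

theorem integral_augmented_ipw_eq_setIntegral_regression [mΩ : MeasurableSpace Ω]
    [StandardBorelSpace Ω] [Nonempty Ω] [MeasurableEq (S × F)] [MeasurableSingletonClass F]
    [MeasurableSingletonClass G] {P : Measure Ω} [IsFiniteMeasure P]
    (hX : Measurable X) (hC : Measurable C) (hA : Measurable A) {Y : Ω → ℝ}
    (hY : Integrable Y P) {g : S → F → G → ℝ}
    (hg : (fun ω => g (X ω) (C ω) (A ω))
      =ᵐ[P] P[Y | MeasurableSpace.comap (fun ω => (X ω, C ω, A ω)) inferInstance])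
    (c : F) (a : G)
    (hpos : ∀ᵐ ω ∂P, 0 <
      (P⟦{ω | A ω = a} | MeasurableSpace.comap (fun ω => (X ω, C ω)) inferInstance⟧) ω)
    {b : S → F → ℝ} (hb : Measurable fun q : S × F => b q.1 q.2)
    (hb_int : Integrable (fun ω => b (X ω) (C ω)) P)
    (hint : Integrable (fun ω => {ω | C ω = c ∧ A ω = a}.indicator (fun _ => (1 : ℝ)) ω
      * ((P⟦{ω | A ω = a} | MeasurableSpace.comap (fun ω => (X ω, C ω)) inferInstance⟧) ω)⁻¹
      * (Y ω - b (X ω) (C ω))) P) :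
    ∫ ω, ({ω | C ω = c ∧ A ω = a}.indicator (fun _ => (1 : ℝ)) ω
        * ((P⟦{ω | A ω = a} | MeasurableSpace.comap (fun ω => (X ω, C ω)) inferInstance⟧) ω)⁻¹
        * (Y ω - b (X ω) (C ω))
      + {ω | C ω = c}.indicator (fun _ => (1 : ℝ)) ω * b (X ω) (C ω)) ∂P
      = ∫ ω in {ω | C ω = c}, g (X ω) c a ∂P := by
  have hm₂ : MeasurableSpace.comap (fun ω => (X ω, C ω)) inferInstance ≤ mΩ :=
    (hX.prodMk hC).comap_le
  have hsC : MeasurableSet[MeasurableSpace.comap (fun ω => (X ω, C ω)) inferInstance]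
      {ω | C ω = c} :=
    (measurable_snd.comp (comap_measurable _)) (measurableSet_singleton c)
  refine (integral_augmented_ipw_eq_setIntegral_condExp_div hm₂ hsC
    (hA (measurableSet_singleton a)) hY (hb.comp (comap_measurable _)).stronglyMeasurable
    hb_int hpos hint).trans
    (setIntegral_congr_ae (hm₂ _ hsC) ?_)
  filter_upwards [ae_eq_condExp_indicator_div_of_condExp_pos hX hC hA hY hg a hpos]
    with ω hω (hωc : C ω = c)
  rw [← hωc]
  exact hω.symm

end Triple

theorem toReal_smul_integral_cond {Ω E : Type*} [MeasurableSpace Ω] [NormedAddCommGroup E]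
    [NormedSpace ℝ E] (μ : Measure Ω) [IsFiniteMeasure μ] (s : Set Ω) (f : Ω → E) :
    (μ s).toReal • ∫ ω, f ω ∂μ[|s] = ∫ ω in s, f ω ∂μ := by
  by_cases hs : μ s = 0
  · simp [hs, Measure.restrict_eq_zero.mpr hs]
  · rw [ProbabilityTheory.cond, integral_smul_measure, ENNReal.toReal_inv, smul_smul,
      mul_inv_cancel₀ (ENNReal.toReal_ne_zero.mpr ⟨hs, measure_ne_top μ s⟩), one_smul]

theorem augmented_estimator_phi_robust_to_outcome_model_misspecification_general
    {Ω S 𝒜 : Type*} [MeasurableSpace Ω] [StandardBorelSpace Ω] [Nonempty Ω]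
    [MeasurableSpace S] [StandardBorelSpace S]
    [MeasurableSpace 𝒜] [MeasurableSingletonClass 𝒜]
    {m : ℕ}
    (P : Measure Ω) [IsProbabilityMeasure P]
    (X : Ω → S) (C : Ω → Fin m) (A : Ω → 𝒜) (Y : Ω → ℝ)
    (hX : Measurable X) (hC : Measurable C) (hA : Measurable A)
    (hY : Integrable Y P)
    -- g a x c is a version of E[Y | X = x, C = c, A = a]
    (g : S → Fin m → 𝒜 → ℝ)
    (hg : (fun ω => g (X ω) (C ω) (A ω))
        =ᵐ[P] P[Y | MeasurableSpace.comap (fun ω => (X ω, C ω, A ω)) inferInstance])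
    -- e x c a is a version of P[A = a | X = x, C = c]
    (e : S → Fin m → 𝒜 → ℝ)
    (he : ∀ a : 𝒜, (fun ω => e (X ω) (C ω) a)
        =ᵐ[P] P[({ω' | A ω' = a}.indicator (fun _ => (1 : ℝ))) |
            MeasurableSpace.comap (fun ω => (X ω, C ω)) inferInstance])
    -- A3: positivity of treatment assignment
    (hA3 : ∀ a : 𝒜, ∀ᵐ ω ∂P, 0 < e (X ω) (C ω) a)
    -- fixed center and treatment
    (c : Fin m) (a : 𝒜)
    -- g* : arbitrary bounded measurable outcome-model limit
    (gs : S → Fin m → ℝ)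
    (hgs_meas : Measurable fun q : S × Fin m => gs q.1 q.2)
    (hgs_bdd : ∃ M : ℝ, ∀ (x : S) (c' : Fin m), |gs x c'| ≤ M)
    -- the inverse-probability-weighted term has a well-defined expectation
    (hint : Integrable (fun ω =>
        ({ω' | C ω' = c ∧ A ω' = a}.indicator (fun _ => (1 : ℝ)) ω)
          * (e (X ω) (C ω) a)⁻¹ * (Y ω - gs (X ω) (C ω))) P) :
    ∫ ω, (({ω' | C ω' = c ∧ A ω' = a}.indicator (fun _ => (1 : ℝ)) ω)
            * (e (X ω) (C ω) a)⁻¹ * (Y ω - gs (X ω) (C ω))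
          + ({ω' | C ω' = c}.indicator (fun _ => (1 : ℝ)) ω) * gs (X ω) (C ω)) ∂P
      = (P {ω | C ω = c}).toReal * ∫ ω, g (X ω) c a ∂(P[|{ω | C ω = c}]) := by
  obtain ⟨M, hM⟩ := hgs_bdd
  have hgs_int : Integrable (fun ω => gs (X ω) (C ω)) P :=
    (integrable_const M).mono' (hgs_meas.comp (hX.prodMk hC)).aestronglyMeasurable
      (ae_of_all _ fun ω => hM _ _)
  have hpos := ((hA3 a).and (he a)).mono fun _ h => h.1.trans_eq h.2
  rw [← smul_eq_mul, toReal_smul_integral_cond, ← integral_augmented_ipw_eq_setIntegral_regression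
    hX hC hA hY hg c a hpos hgs_meas hgs_int (hint.congr ?_)]
  · refine integral_congr_ae ?_
    filter_upwards [he a] with ω h
    rw [h]
  · filter_upwards [he a] with ω h
    rw [h]

/-- Under positivity (A3), for any bounded measurable outcome-model
limit `g* : S × {1, …, m} → ℝ`,
`E[ 1{C = c, A = a} e_a(X, C)⁻¹ (Y − g*(X, C)) + 1{C = c} g*(X, C) ]
  = P[C = c] · φ(c, a)`;
hence the asymptotic limit of the augmented estimator for `φ(c, a)` equals `φ(c, a)`
even when `g*` differs from the true conditional outcome mean `g_a`: the analysis is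
robust to outcome-model misspecification. -/
theorem augmented_estimator_phi_robust_to_outcome_model_misspecification
    {Ω S 𝒜 : Type*} [MeasurableSpace Ω] [StandardBorelSpace Ω] [Nonempty Ω]
    [MeasurableSpace S] [StandardBorelSpace S]
    [MeasurableSpace 𝒜] [MeasurableSingletonClass 𝒜] [Fintype 𝒜]
    {m : ℕ}
    (P : Measure Ω) [IsProbabilityMeasure P]
    (X : Ω → S) (C : Ω → Fin m) (A : Ω → 𝒜) (Y : Ω → ℝ)
    (hX : Measurable X) (hC : Measurable C) (hA : Measurable A)
    (hY : Integrable Y P)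
    (hCpos : ∀ c' : Fin m, 0 < P {ω | C ω = c'})
    -- g a x c is a version of E[Y | X = x, C = c, A = a]
    (g : S → Fin m → 𝒜 → ℝ)
    (hg : (fun ω => g (X ω) (C ω) (A ω))
        =ᵐ[P] P[Y | MeasurableSpace.comap (fun ω => (X ω, C ω, A ω)) inferInstance])
    -- e x c a is a version of P[A = a | X = x, C = c]
    (e : S → Fin m → 𝒜 → ℝ)
    (he : ∀ a : 𝒜, (fun ω => e (X ω) (C ω) a)
        =ᵐ[P] P[({ω' | A ω' = a}.indicator (fun _ => (1 : ℝ))) |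
            MeasurableSpace.comap (fun ω => (X ω, C ω)) inferInstance])
    -- A3: positivity of treatment assignment
    (hA3 : ∀ a : 𝒜, ∀ᵐ ω ∂P, 0 < e (X ω) (C ω) a)
    -- fixed center and treatment
    (c : Fin m) (a : 𝒜)
    -- g* : arbitrary bounded measurable outcome-model limit
    (gs : S → Fin m → ℝ)
    (hgs_meas : Measurable fun q : S × Fin m => gs q.1 q.2)
    (hgs_bdd : ∃ M : ℝ, ∀ (x : S) (c' : Fin m), |gs x c'| ≤ M)
    -- the inverse-probability-weighted term has a well-defined expectation
    (hint : Integrable (fun ω =>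
        ({ω' | C ω' = c ∧ A ω' = a}.indicator (fun _ => (1 : ℝ)) ω)
          * (e (X ω) (C ω) a)⁻¹ * (Y ω - gs (X ω) (C ω))) P) :
    ∫ ω, (({ω' | C ω' = c ∧ A ω' = a}.indicator (fun _ => (1 : ℝ)) ω)
            * (e (X ω) (C ω) a)⁻¹ * (Y ω - gs (X ω) (C ω))
          + ({ω' | C ω' = c}.indicator (fun _ => (1 : ℝ)) ω) * gs (X ω) (C ω)) ∂P
      = (P {ω | C ω = c}).toReal * ∫ ω, g (X ω) c a ∂(P[|{ω | C ω = c}]) :=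
  augmented_estimator_phi_robust_to_outcome_model_misspecification_general P X C A Y hX hC hA hY g
    hg e he hA3 c a gs hgs_meas hgs_bdd hint
end

section
/- Assume e_a(X) = P[A = a | X] > 0 almost surely and let g* : S → ℝ be any bounded measurable function. Then E[ 1{A = a} · p_c(X) · e_a(X)^{-1} · (Y − g*(X)) + 1{C = c} · g*(X) ] = P[C = c] · ψ(c, a). Consequently, when the participation model p_c and the treatment model e_a are correctly specified, the asymptotic limit of the augmented estimator for ψ(c, a) equals ψ(c, a) even when the outcome-model limit g* differs from h_a. -/
/-!
Conditioning on `(X, A)` replaces `Y - g*(X)` on `{A = a}` by `h_a(X) - g*(X)`; conditioning then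
on `X` replaces `1{A = a}` by `e_a(X)`, which cancels the inverse weight. So the weighted term has
mean `E[p_c(X) (h_a(X) - g*(X))]`, the augmentation term has mean `E[p_c(X) g*(X)]`, the `g*`-terms
cancel, and `E[p_c(X) h_a(X)] = E[1{C = c} h_a(X)] = P[C = c] ψ(c, a)`.

Since `h` is pinned down only almost surely along the graph of `(X, A)`, `h_a(X)` has to be matched
with a measurable version of `E[Y | X, A]` at `A = a`: a regular conditional distribution of `ω`
given `X` charges, for almost every `ω`, the part of the fiber of `X ω` inside `{A = a}` (as
`e_a(X ω) > 0`), so that fiber contains a point where `h` and the version agree.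
-/

open MeasureTheory ProbabilityTheory
open scoped ENNReal

namespace MeasureTheory

variable {Ω : Type*} {m m0 : MeasurableSpace Ω} {μ : Measure Ω}

theorem lintegral_mul_condLExp (hm : m ≤ m0) [SigmaFinite (μ.trim hm)] {F G : Ω → ℝ≥0∞}
    (hF : Measurable[m] F) (hG : AEMeasurable G μ) :
    ∫⁻ ω, F ω * μ⁻[G|m] ω ∂μ = ∫⁻ ω, F ω * G ω ∂μ := by
  have htrim : (μ.withDensity μ⁻[G|m]).trim hm = (μ.withDensity G).trim hm := by
    refine @Measure.ext _ m _ _ fun s hs => ?_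
    rw [trim_measurableSet_eq hm hs, trim_measurableSet_eq hm hs, withDensity_apply _ (hm s hs),
      withDensity_apply _ (hm s hs), setLIntegral_condLExp hm _ _ hs]
  calc ∫⁻ ω, F ω * μ⁻[G|m] ω ∂μ = ∫⁻ ω, F ω ∂(μ.withDensity μ⁻[G|m]).trim hm := by
        rw [lintegral_trim hm hF, lintegral_withDensity_eq_lintegral_mul₀
          (measurable_condLExp' m μ G).aemeasurable (hF.mono hm le_rfl).aemeasurable]
        simp only [Pi.mul_apply, mul_comm]
    _ = ∫⁻ ω, F ω * G ω ∂μ := by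
        rw [htrim, lintegral_trim hm hF, lintegral_withDensity_eq_lintegral_mul₀ hG
          (hF.mono hm le_rfl).aemeasurable]
        simp only [Pi.mul_apply, mul_comm]

theorem integrable_mul_condExp {f g : Ω → ℝ} (hf : StronglyMeasurable[m] f)
    (hfg : Integrable (fun ω => f ω * g ω) μ) (hg : Integrable g μ) :
    Integrable (fun ω => f ω * μ[g|m] ω) μ :=
  integrable_condExp.congr (condExp_mul_of_stronglyMeasurable_left hf hfg hg)

theorem integral_mul_condExp (hm : m ≤ m0) [SigmaFinite (μ.trim hm)] {f g : Ω → ℝ}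
    (hf : StronglyMeasurable[m] f) (hfg : Integrable (fun ω => f ω * g ω) μ)
    (hg : Integrable g μ) :
    ∫ ω, f ω * μ[g|m] ω ∂μ = ∫ ω, f ω * g ω ∂μ := by
  rw [← integral_condExp hm (f := fun ω => f ω * g ω)]
  exact (integral_congr_ae (condExp_mul_of_stronglyMeasurable_left hf hfg hg)).symm

theorem integrable_mul_of_integrable_mul_condExp (hm : m ≤ m0) [SigmaFinite (μ.trim hm)]
    {f g : Ω → ℝ} (hf : StronglyMeasurable[m] f) (hg : Integrable g μ) (hg_nonneg : 0 ≤ᵐ[μ] g)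
    (hfg : Integrable (fun ω => f ω * μ[g|m] ω) μ) : Integrable (fun ω => f ω * g ω) μ := by
  refine ⟨(hf.mono hm).aestronglyMeasurable.mul hg.aestronglyMeasurable, ?_⟩
  have key : ∫⁻ ω, ‖f ω‖ₑ * ‖g ω‖ₑ ∂μ = ∫⁻ ω, ‖f ω‖ₑ * ‖μ[g|m] ω‖ₑ ∂μ := by
    rw [← lintegral_mul_condLExp hm (F := fun ω => ‖f ω‖ₑ) (measurable_enorm.comp hf.measurable)
      hg.aemeasurable.enorm]
    exact lintegral_congr_ae <|
      (condLExp_enorm m hg hg_nonneg).mono fun ω hω => congrArg (‖f ω‖ₑ * ·) hω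
  simpa [HasFiniteIntegral, enorm_mul, key] using hfg.hasFiniteIntegral

end MeasureTheory

namespace ProbabilityTheory

section PropensityWeighting

variable {Ω : Type*} {m₁ m₂ m0 : MeasurableSpace Ω} {μ : Measure Ω} [IsFiniteMeasure μ]

theorem integral_inverse_propensity_weighted_eq (hm₁₂ : m₁ ≤ m₂) (hm₂ : m₂ ≤ m0) {s : Set Ω}
    (hs : MeasurableSet[m₂] s) (hpos : ∀ᵐ ω ∂μ, 0 < μ[s.indicator (fun _ => (1 : ℝ))|m₁] ω)
    {q w Z : Ω → ℝ} (hq : StronglyMeasurable[m₁] q) (hw : StronglyMeasurable[m₁] w)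
    (hZ : Integrable Z μ) (hZw : ∀ᵐ ω ∂μ, ω ∈ s → μ[Z|m₂] ω = w ω)
    (hint : Integrable (fun ω => s.indicator (fun _ => (1 : ℝ)) ω * q ω
      * (μ[s.indicator (fun _ => (1 : ℝ))|m₁] ω)⁻¹ * Z ω) μ) :
    Integrable (fun ω => q ω * w ω) μ ∧
      ∫ ω, s.indicator (fun _ => (1 : ℝ)) ω * q ω
        * (μ[s.indicator (fun _ => (1 : ℝ))|m₁] ω)⁻¹ * Z ω ∂μ = ∫ ω, q ω * w ω ∂μ := by
  set χ : Ω → ℝ := s.indicator fun _ => 1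
  set π := μ[χ|m₁]
  have hχ : Integrable χ μ := (integrable_const 1).indicator (hm₂ s hs)
  have hπ : Measurable[m₁] π := stronglyMeasurable_condExp.measurable
  have hf : StronglyMeasurable[m₂] fun ω => χ ω * q ω * (π ω)⁻¹ :=
    (((measurable_const.indicator hs).mul (hq.measurable.mono hm₁₂ le_rfl)).mul
      (hπ.inv.mono hm₁₂ le_rfl)).stronglyMeasurable
  have hk : StronglyMeasurable[m₁] fun ω => q ω * (π ω)⁻¹ * w ω :=
    ((hq.measurable.mul hπ.inv).mul hw.measurable).stronglyMeasurable
  have hcond : (fun ω => χ ω * q ω * (π ω)⁻¹ * μ[Z|m₂] ω)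
      =ᵐ[μ] fun ω => q ω * (π ω)⁻¹ * w ω * χ ω := by
    filter_upwards [hZw] with ω hω
    by_cases hωs : ω ∈ s
    · simp [χ, hωs, hω hωs, mul_comm]
    · simp [χ, hωs]
  have hkχ : Integrable (fun ω => q ω * (π ω)⁻¹ * w ω * χ ω) μ :=
    (integrable_mul_condExp hf hint hZ).congr hcond
  have hcancel : (fun ω => q ω * (π ω)⁻¹ * w ω * π ω) =ᵐ[μ] fun ω => q ω * w ω := by
    filter_upwards [hpos] with ω hω
    field_simp
  refine ⟨(integrable_mul_condExp hk hkχ hχ).congr hcancel, ?_⟩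
  calc _ = ∫ ω, χ ω * q ω * (π ω)⁻¹ * μ[Z|m₂] ω ∂μ := (integral_mul_condExp hm₂ hf hint hZ).symm
    _ = ∫ ω, q ω * (π ω)⁻¹ * w ω * χ ω ∂μ := integral_congr_ae hcond
    _ = ∫ ω, q ω * (π ω)⁻¹ * w ω * π ω ∂μ :=
      (integral_mul_condExp (hm₁₂.trans hm₂) hk hkχ hχ).symm
    _ = ∫ ω, q ω * w ω ∂μ := integral_congr_ae hcancel

theorem integral_augmented_inverse_propensity_weighted_eq (hm₁₂ : m₁ ≤ m₂) (hm₂ : m₂ ≤ m0)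
    {s t : Set Ω} (hs : MeasurableSet[m₂] s) (ht : MeasurableSet t) {e p Y g w : Ω → ℝ}
    (he : e =ᵐ[μ] μ[s.indicator (fun _ => (1 : ℝ))|m₁]) (hepos : ∀ᵐ ω ∂μ, 0 < e ω)
    (hp : p =ᵐ[μ] μ[t.indicator (fun _ => (1 : ℝ))|m₁])
    (hY : Integrable Y μ) (hg : StronglyMeasurable[m₁] g) (hg_int : Integrable g μ)
    (hw : StronglyMeasurable[m₁] w) (hYw : ∀ᵐ ω ∂μ, ω ∈ s → μ[Y|m₂] ω = w ω)
    (hint : Integrable (fun ω => s.indicator (fun _ => (1 : ℝ)) ω * p ω * (e ω)⁻¹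
      * (Y ω - g ω)) μ) :
    ∫ ω, (s.indicator (fun _ => (1 : ℝ)) ω * p ω * (e ω)⁻¹ * (Y ω - g ω)
        + t.indicator (fun _ => (1 : ℝ)) ω * g ω) ∂μ
      = ∫ ω, t.indicator (fun _ => (1 : ℝ)) ω * w ω ∂μ := by
  set χ : Ω → ℝ := t.indicator fun _ => 1
  set π := μ[χ|m₁]
  have hm₁ : m₁ ≤ m0 := hm₁₂.trans hm₂
  have hχ : Integrable χ μ := (integrable_const 1).indicator ht
  have hversions : (fun ω => s.indicator (fun _ => (1 : ℝ)) ω * p ω * (e ω)⁻¹ * (Y ω - g ω))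
      =ᵐ[μ] fun ω => s.indicator (fun _ => (1 : ℝ)) ω * π ω
        * (μ[s.indicator (fun _ => (1 : ℝ))|m₁] ω)⁻¹ * (Y ω - g ω) := by
    filter_upwards [he, hp] with ω hωe hωp
    rw [hωe, hωp]
  have hYg : ∀ᵐ ω ∂μ, ω ∈ s → μ[fun ω => Y ω - g ω|m₂] ω = w ω - g ω := by
    filter_upwards [condExp_sub (m := m₂) hY hg_int, hYw] with ω hsub hω hωs
    rw [show (fun ω => Y ω - g ω) = Y - g from rfl, hsub, Pi.sub_apply, hω hωs,
      condExp_of_stronglyMeasurable hm₂ (hg.mono hm₁₂) hg_int]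
  obtain ⟨hπwg, hipw⟩ := integral_inverse_propensity_weighted_eq (w := fun ω => w ω - g ω)
    (Z := fun ω => Y ω - g ω) hm₁₂ hm₂ hs (he.rw (fun ω r => 0 < r) hepos)
    stronglyMeasurable_condExp (hw.sub hg) (hY.sub hg_int) hYg (hint.congr hversions)
  have hgχ : Integrable (fun ω => g ω * χ ω) μ :=
    (hg_int.indicator ht).congr (ae_of_all _ fun ω => by by_cases hω : ω ∈ t <;> simp [χ, hω])
  have hπg : Integrable (fun ω => g ω * π ω) μ := integrable_mul_condExp hg hgχ hχ
  have hπw : Integrable (fun ω => w ω * π ω) μ :=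
    (hπwg.add hπg).congr (ae_of_all _ fun ω => by simp only [Pi.add_apply]; ring)
  have hwχ : Integrable (fun ω => w ω * χ ω) μ :=
    integrable_mul_of_integrable_mul_condExp hm₁ hw hχ
      (ae_of_all _ fun ω => Set.indicator_nonneg (fun _ _ => zero_le_one) ω) hπw
  rw [integral_add hint (hgχ.congr (ae_of_all _ fun ω => mul_comm _ _)),
    integral_congr_ae hversions, hipw]
  calc ∫ ω, π ω * (w ω - g ω) ∂μ + ∫ ω, χ ω * g ω ∂μ
      = ∫ ω, π ω * (w ω - g ω) ∂μ + ∫ ω, g ω * π ω ∂μ := by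
        rw [integral_mul_condExp hm₁ hg hgχ hχ]
        simp only [mul_comm]
    _ = ∫ ω, w ω * π ω ∂μ := by
      rw [← integral_add hπwg hπg]
      exact integral_congr_ae (ae_of_all _ fun ω => by ring)
    _ = ∫ ω, χ ω * w ω ∂μ := by
      rw [integral_mul_condExp hm₁ hw hwχ hχ]
      simp only [mul_comm]

end PropensityWeighting

theorem ae_exists_mem_fiber {Ω S : Type*} [MeasurableSpace Ω] [StandardBorelSpace Ω] [Nonempty Ω]
    [MeasurableSpace S] [MeasurableEq S] {μ : Measure Ω} [IsFiniteMeasure μ] {X : Ω → S}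
    (hX : Measurable X) {s : Set Ω} (hs : MeasurableSet s)
    (hpos : ∀ᵐ ω ∂μ,
      0 < μ[s.indicator (fun _ => (1 : ℝ)) | MeasurableSpace.comap X inferInstance] ω)
    {Q : Ω → Prop} (hQ : ∀ᵐ ω ∂μ, Q ω) :
    ∀ᵐ ω ∂μ, ∃ ω' ∈ s, Q ω' ∧ X ω' = X ω := by
  obtain ⟨N, hQN, hN, hN0⟩ := exists_measurable_superset_of_null (ae_iff.mp hQ)
  have hfiber : ∀ᵐ ω ∂μ, ∀ᵐ ω' ∂condDistrib id X μ (X ω), ω' ∉ N ∧ X ω' = X ω := by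
    have hgraph : ∀ᵐ z ∂(μ.map X ⊗ₘ condDistrib id X μ), z.2 ∉ N ∧ X z.2 = z.1 := by
      have hgraph_meas : MeasurableSet {z : S × Ω | z.2 ∉ N ∧ X z.2 = z.1} :=
        (hN.compl.preimage measurable_snd).inter
          (measurableSet_eq_fun (hX.comp measurable_snd) measurable_fst)
      rw [compProd_map_condDistrib aemeasurable_id,
        ae_map_iff (hX.prodMk measurable_id).aemeasurable hgraph_meas]
      filter_upwards [measure_eq_zero_iff_ae_notMem.mp hN0] with ω hω using ⟨hω, rfl⟩
    exact ae_of_ae_map hX.aemeasurable (Measure.ae_ae_of_ae_compProd hgraph)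
  have hmass : ∀ᵐ ω ∂μ, condDistrib id X μ (X ω) s ≠ 0 := by
    filter_upwards [condDistrib_ae_eq_condExp hX measurable_id hs, hpos] with ω hω hωpos h0
    rw [Set.preimage_id, measureReal_def, h0, ENNReal.toReal_zero] at hω
    exact hωpos.ne hω
  filter_upwards [hfiber, hmass] with ω hω hωs
  obtain ⟨ω', hω's, hω'N, hω'X⟩ :=
    Measure.exists_mem_of_measure_ne_zero_of_ae hωs (ae_restrict_of_ae hω)
  exact ⟨ω', hω's, not_not.mp fun hω'Q => hω'N (hQN hω'Q), hω'X⟩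

theorem ae_apply_eq_of_ae_eq_of_propensity_pos {Ω S 𝒜 β : Type*} [MeasurableSpace Ω]
    [StandardBorelSpace Ω] [Nonempty Ω] [MeasurableSpace S] [MeasurableEq S] [MeasurableSpace 𝒜]
    [MeasurableSingletonClass 𝒜] {μ : Measure Ω} [IsFiniteMeasure μ] {X : Ω → S} {A : Ω → 𝒜}
    (hX : Measurable X) (hA : Measurable A) {a : 𝒜}
    (hpos : ∀ᵐ ω ∂μ,
      0 < μ[{ω' | A ω' = a}.indicator (fun _ => (1 : ℝ)) | MeasurableSpace.comap X inferInstance] ω)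
    {u v : S → 𝒜 → β} (huv : ∀ᵐ ω ∂μ, u (X ω) (A ω) = v (X ω) (A ω)) :
    ∀ᵐ ω ∂μ, u (X ω) a = v (X ω) a := by
  filter_upwards [ae_exists_mem_fiber hX (hA (measurableSet_singleton a)) hpos huv]
    with ω ⟨ω', (hω'a : A ω' = a), hω', hω'X⟩
  rwa [← hω'X, ← hω'a]

theorem toReal_measure_mul_integral_cond {Ω : Type*} [MeasurableSpace Ω] {μ : Measure Ω}
    [IsFiniteMeasure μ] {s : Set Ω} (hs : MeasurableSet s) (f : Ω → ℝ) :
    (μ s).toReal * ∫ ω, f ω ∂μ[|s] = ∫ ω, s.indicator (fun _ => (1 : ℝ)) ω * f ω ∂μ := by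
  have hind : ∫ ω, s.indicator (fun _ => (1 : ℝ)) ω * f ω ∂μ = ∫ ω in s, f ω ∂μ := by
    rw [← integral_indicator hs]
    exact integral_congr_ae (ae_of_all _ fun ω => by by_cases hω : ω ∈ s <;> simp [hω])
  rw [hind]
  rcases eq_or_ne (μ s) 0 with hs0 | hs0
  · simp [Measure.restrict_eq_zero.mpr hs0, hs0]
  · rw [ProbabilityTheory.cond, integral_smul_measure, smul_eq_mul, ← mul_assoc,
      ENNReal.toReal_inv, mul_inv_cancel₀ (ENNReal.toReal_ne_zero.mpr ⟨hs0, measure_ne_top μ s⟩),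
      one_mul]

end ProbabilityTheory

theorem augmented_estimator_psi_robust_to_outcome_model_misspecification_general
    {Ω S 𝒜 : Type*} [MeasurableSpace Ω] [StandardBorelSpace Ω] [Nonempty Ω]
    [MeasurableSpace S] [StandardBorelSpace S]
    [MeasurableSpace 𝒜] [MeasurableSingletonClass 𝒜]
    {m : ℕ}
    (P : Measure Ω) [IsProbabilityMeasure P]
    (X : Ω → S) (C : Ω → Fin m) (A : Ω → 𝒜) (Y : Ω → ℝ)
    (hX : Measurable X) (hC : Measurable C) (hA : Measurable A)
    (hY : Integrable Y P)
    -- fixed center and treatment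
    (c : Fin m) (a : 𝒜)
    -- h a x is a version of E[Y | X = x, A = a]
    (h : S → 𝒜 → ℝ)
    (hh : (fun ω => h (X ω) (A ω))
        =ᵐ[P] P[Y | MeasurableSpace.comap (fun ω => (X ω, A ω)) inferInstance])
    -- e x is a version of P[A = a | X = x] (correctly specified treatment model)
    (e : S → ℝ)
    (he : (fun ω => e (X ω))
        =ᵐ[P] P[({ω' | A ω' = a}.indicator (fun _ => (1 : ℝ))) |
            MeasurableSpace.comap X inferInstance])
    (hepos : ∀ᵐ ω ∂P, 0 < e (X ω))
    -- p x is a version of P[C = c | X = x] (correctly specified participation model)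
    (p : S → ℝ)
    (hp : (fun ω => p (X ω))
        =ᵐ[P] P[({ω' | C ω' = c}.indicator (fun _ => (1 : ℝ))) |
            MeasurableSpace.comap X inferInstance])
    -- g* : arbitrary bounded measurable outcome-model limit
    (gs : S → ℝ) (hgs_meas : Measurable gs)
    (hgs_bdd : ∃ M : ℝ, ∀ x : S, |gs x| ≤ M)
    -- the inverse-probability-weighted term has a well-defined expectation
    (hint : Integrable (fun ω =>
        ({ω' | A ω' = a}.indicator (fun _ => (1 : ℝ)) ω)
          * p (X ω) * (e (X ω))⁻¹ * (Y ω - gs (X ω))) P) :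
    ∫ ω, (({ω' | A ω' = a}.indicator (fun _ => (1 : ℝ)) ω)
            * p (X ω) * (e (X ω))⁻¹ * (Y ω - gs (X ω))
          + ({ω' | C ω' = c}.indicator (fun _ => (1 : ℝ)) ω) * gs (X ω)) ∂P
      = (P {ω | C ω = c}).toReal * ∫ ω, h (X ω) a ∂(P[|{ω | C ω = c}]) := by
  have hmX_XA : MeasurableSpace.comap X inferInstance
      ≤ MeasurableSpace.comap (fun ω => (X ω, A ω)) inferInstance :=
    (measurable_fst.comp (comap_measurable fun ω => (X ω, A ω))).comap_le
  have hsA : MeasurableSet[MeasurableSpace.comap (fun ω => (X ω, A ω)) inferInstance]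
      {ω | A ω = a} :=
    (measurable_snd.comp (comap_measurable fun ω => (X ω, A ω))) (measurableSet_singleton a)
  obtain ⟨φ, hφ, hGφ⟩ := (stronglyMeasurable_condExp (f := Y) (μ := P)
    (m := MeasurableSpace.comap (fun ω => (X ω, A ω)) inferInstance)).exists_eq_measurable_comp
  have hha : (fun ω => h (X ω) a) =ᵐ[P] fun ω => φ (X ω, a) :=
    ae_apply_eq_of_ae_eq_of_propensity_pos (v := fun x b => φ (x, b)) hX hA
      (he.rw (fun ω r => 0 < r) hepos) (hh.trans (Filter.EventuallyEq.of_eq hGφ))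
  obtain ⟨M, hM⟩ := hgs_bdd
  have hgs_int : Integrable (fun ω => gs (X ω)) P :=
    .of_bound (hgs_meas.comp hX).aestronglyMeasurable M (ae_of_all _ fun ω => hM (X ω))
  have hsC : MeasurableSet {ω | C ω = c} := hC (measurableSet_singleton c)
  rw [toReal_measure_mul_integral_cond hsC,
    integral_congr_ae (hha.mono fun ω hω => congrArg (_ * ·) hω)]
  exact integral_augmented_inverse_propensity_weighted_eq hmX_XA (hX.prodMk hA).comap_le hsA hsC
    he hepos hp hY (hgs_meas.comp (comap_measurable X)).stronglyMeasurable hgs_int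
    (hφ.measurable.comp ((comap_measurable X).prodMk measurable_const)).stronglyMeasurable
    (ae_of_all _ fun ω (hωa : A ω = a) => by rw [hGφ, Function.comp_apply, hωa]) hint

/-- Assume `e_a(X) = P[A = a | X] > 0` almost surely and let
`g* : S → ℝ` be any bounded measurable function. Then
`E[ 1{A = a} p_c(X) e_a(X)⁻¹ (Y − g*(X)) + 1{C = c} g*(X) ] = P[C = c] · ψ(c, a)`;
hence when the participation model `p_c` and the treatment model `e_a` are correctly
specified, the asymptotic limit of the augmented estimator for `ψ(c, a)` equals
`ψ(c, a)` even when the outcome-model limit `g*` differs from `h_a`. -/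
theorem augmented_estimator_psi_robust_to_outcome_model_misspecification
    {Ω S 𝒜 : Type*} [MeasurableSpace Ω] [StandardBorelSpace Ω] [Nonempty Ω]
    [MeasurableSpace S] [StandardBorelSpace S]
    [MeasurableSpace 𝒜] [MeasurableSingletonClass 𝒜] [Fintype 𝒜]
    {m : ℕ}
    (P : Measure Ω) [IsProbabilityMeasure P]
    (X : Ω → S) (C : Ω → Fin m) (A : Ω → 𝒜) (Y : Ω → ℝ)
    (hX : Measurable X) (hC : Measurable C) (hA : Measurable A)
    (hY : Integrable Y P)
    (hCpos : ∀ c' : Fin m, 0 < P {ω | C ω = c'})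
    -- fixed center and treatment
    (c : Fin m) (a : 𝒜)
    -- h a x is a version of E[Y | X = x, A = a]
    (h : S → 𝒜 → ℝ)
    (hh : (fun ω => h (X ω) (A ω))
        =ᵐ[P] P[Y | MeasurableSpace.comap (fun ω => (X ω, A ω)) inferInstance])
    -- e x is a version of P[A = a | X = x] (correctly specified treatment model)
    (e : S → ℝ)
    (he : (fun ω => e (X ω))
        =ᵐ[P] P[({ω' | A ω' = a}.indicator (fun _ => (1 : ℝ))) |
            MeasurableSpace.comap X inferInstance])
    (hepos : ∀ᵐ ω ∂P, 0 < e (X ω))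
    -- p x is a version of P[C = c | X = x] (correctly specified participation model)
    (p : S → ℝ)
    (hp : (fun ω => p (X ω))
        =ᵐ[P] P[({ω' | C ω' = c}.indicator (fun _ => (1 : ℝ))) |
            MeasurableSpace.comap X inferInstance])
    -- g* : arbitrary bounded measurable outcome-model limit
    (gs : S → ℝ) (hgs_meas : Measurable gs)
    (hgs_bdd : ∃ M : ℝ, ∀ x : S, |gs x| ≤ M)
    -- the inverse-probability-weighted term has a well-defined expectation
    (hint : Integrable (fun ω =>
        ({ω' | A ω' = a}.indicator (fun _ => (1 : ℝ)) ω)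
          * p (X ω) * (e (X ω))⁻¹ * (Y ω - gs (X ω))) P) :
    ∫ ω, (({ω' | A ω' = a}.indicator (fun _ => (1 : ℝ)) ω)
            * p (X ω) * (e (X ω))⁻¹ * (Y ω - gs (X ω))
          + ({ω' | C ω' = c}.indicator (fun _ => (1 : ℝ)) ω) * gs (X ω)) ∂P
      = (P {ω | C ω = c}).toReal * ∫ ω, h (X ω) a ∂(P[|{ω | C ω = c}]) :=
  augmented_estimator_psi_robust_to_outcome_model_misspecification_general P X C A Y hX hC hA hY c a
    h hh e he hepos p hp gs hgs_meas hgs_bdd hint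
end

section
/- Let p*, e* : S → [0, ∞) be measurable functions with e*(X) > 0 almost surely and p*(X)/e*(X) bounded. Then E[ 1{A = a} · (p*(X)/e*(X)) · (Y − h_a(X)) ] = 0, and consequently E[ 1{A = a} · (p*(X)/e*(X)) · (Y − h_a(X)) + 1{C = c} · h_a(X) ] = P[C = c] · ψ(c, a); that is, when the outcome model is correctly specified, the asymptotic limit of the augmented estimator for ψ(c, a) equals ψ(c, a) regardless of misspecification of the participation and treatment models. -/
/-!
The weight `w(X, A) = 1{A = a} p*(X) / e*(X)` is a bounded `σ(X, A)`-measurable random variable,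
so it can be pulled out of the conditional expectation given `(X, A)`:
`E[w Y] = E[w E[Y | X, A]] = E[w h_A(X)]`, and on `{A = a}` we have `h_A(X) = h_a(X)`.
Hence the weighted residual has mean zero whatever the weight, and the augmentation term
`E[1{C = c} h_a(X)]` is `P[C = c] · E[h_a(X) | C = c]`.
-/

open MeasureTheory ProbabilityTheory

theorem Set.indicator_one_mul_apply {ι M₀ : Type*} [MulZeroOneClass M₀] (s : Set ι) (f : ι → M₀)
    (i : ι) : s.indicator (fun _ => (1 : M₀)) i * f i = s.indicator f i := by
  by_cases hi : i ∈ s <;> simp [hi]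

namespace ProbabilityTheory

variable {Ω : Type*} {mΩ : MeasurableSpace Ω} {μ : Measure Ω}

section Residual

variable {β : Type*} [MeasurableSpace β] {Z : Ω → β} {Y : Ω → ℝ} {w : β → ℝ} {K : ℝ} {g : β → ℝ}

theorem integrable_comp_mul_sub_of_ae_eq_condExp_comap (hZ : Measurable Z) (hY : Integrable Y μ)
    (hw : Measurable w) (hwK : ∀ z, ‖w z‖ ≤ K)
    (hg : (fun ω => g (Z ω)) =ᵐ[μ] μ[Y | MeasurableSpace.comap Z inferInstance]) :
    Integrable (fun ω => w (Z ω) * (Y ω - g (Z ω))) μ :=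
  (hY.sub (integrable_condExp.congr hg.symm)).bdd_mul (hw.comp hZ).aestronglyMeasurable
    (ae_of_all _ fun ω => hwK (Z ω))

theorem integral_comp_mul_sub_eq_zero_of_ae_eq_condExp_comap [IsFiniteMeasure μ]
    (hZ : Measurable Z) (hY : Integrable Y μ) (hw : Measurable w) (hwK : ∀ z, ‖w z‖ ≤ K)
    (hg : (fun ω => g (Z ω)) =ᵐ[μ] μ[Y | MeasurableSpace.comap Z inferInstance]) :
    ∫ ω, w (Z ω) * (Y ω - g (Z ω)) ∂μ = 0 := by
  have hm : MeasurableSpace.comap Z inferInstance ≤ mΩ := hZ.comap_le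
  have hwZ : StronglyMeasurable[MeasurableSpace.comap Z inferInstance] (w ∘ Z) :=
    (hw.comp (comap_measurable Z)).stronglyMeasurable
  have hwZ_bound : ∀ᵐ ω ∂μ, ‖w (Z ω)‖ ≤ K := ae_of_all _ fun ω => hwK (Z ω)
  have hwZ_meas : AEStronglyMeasurable (fun ω => w (Z ω)) μ := (hw.comp hZ).aestronglyMeasurable
  have hgZ : Integrable (fun ω => g (Z ω)) μ := integrable_condExp.congr hg.symm
  have hpull_out : ∫ ω, w (Z ω) * Y ω ∂μ = ∫ ω, w (Z ω) * g (Z ω) ∂μ := calc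
    ∫ ω, w (Z ω) * Y ω ∂μ = ∫ ω, μ[(w ∘ Z) * Y | MeasurableSpace.comap Z inferInstance] ω ∂μ :=
      (integral_condExp hm).symm
    _ = ∫ ω, w (Z ω) * g (Z ω) ∂μ := by
      refine integral_congr_ae ?_
      filter_upwards [condExp_stronglyMeasurable_mul_of_bound hm hwZ hY K hwZ_bound, hg]
        with ω hω hgω
      rw [hω, Pi.mul_apply, ← hgω, Function.comp_apply]
  simp_rw [mul_sub]
  rw [integral_sub (hY.bdd_mul hwZ_meas hwZ_bound) (hgZ.bdd_mul hwZ_meas hwZ_bound), hpull_out,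
    sub_self]

end Residual

theorem measureReal_mul_integral_cond {s : Set Ω} (hμs : μ s ≠ ⊤) (f : Ω → ℝ) :
    μ.real s * ∫ ω, f ω ∂μ[|s] = ∫ ω in s, f ω ∂μ := by
  by_cases hs : μ s = 0
  · rw [setIntegral_measure_zero f hs, measureReal_def, hs, ENNReal.toReal_zero, zero_mul]
  · rw [cond, integral_smul_measure, smul_eq_mul, ENNReal.toReal_inv, ← mul_assoc,
      measureReal_def, mul_inv_cancel₀ (ENNReal.toReal_ne_zero.mpr ⟨hs, hμs⟩), one_mul]

theorem integral_indicator_one_mul_eq_measureReal_mul_integral_cond {s : Set Ω}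
    (hs : MeasurableSet s) (hμs : μ s ≠ ⊤) (f : Ω → ℝ) :
    ∫ ω, s.indicator (fun _ => (1 : ℝ)) ω * f ω ∂μ = μ.real s * ∫ ω, f ω ∂μ[|s] := by
  simp_rw [Set.indicator_one_mul_apply]
  rw [integral_indicator hs, measureReal_mul_integral_cond hμs]

end ProbabilityTheory

theorem abs_indicator_one_mul_div_le {ι S : Type*} {t : Set ι} {ps es : S → ℝ} {M : ℝ}
    (hps : ∀ x, 0 ≤ ps x) (hes : ∀ x, 0 ≤ es x) (hM : ∀ x, ps x / es x ≤ M) (i : ι) (x : S) :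
    |t.indicator (fun _ => (1 : ℝ)) i * (ps x / es x)| ≤ max M 0 := by
  by_cases hi : i ∈ t
  · rw [Set.indicator_of_mem hi, one_mul, abs_of_nonneg (div_nonneg (hps x) (hes x))]
    exact le_max_of_le_left (hM x)
  · simp [Set.indicator_of_notMem hi]

theorem augmented_estimator_psi_robust_to_weight_model_misspecification_general
    {Ω S 𝒜 : Type*} [MeasurableSpace Ω]
    [MeasurableSpace S]
    [MeasurableSpace 𝒜] [MeasurableSingletonClass 𝒜]
    {m : ℕ}
    (P : Measure Ω) [IsProbabilityMeasure P]
    (X : Ω → S) (C : Ω → Fin m) (A : Ω → 𝒜) (Y : Ω → ℝ)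
    (hX : Measurable X) (hC : Measurable C) (hA : Measurable A)
    (hY : Integrable Y P)
    -- fixed center and treatment
    (c : Fin m) (a : 𝒜)
    -- h a x is a version of E[Y | X = x, A = a], with h_a(X) integrable
    (h : S → 𝒜 → ℝ)
    (hh : (fun ω => h (X ω) (A ω))
        =ᵐ[P] P[Y | MeasurableSpace.comap (fun ω => (X ω, A ω)) inferInstance])
    (hhint : Integrable (fun ω => h (X ω) a) P)
    -- possibly misspecified participation and treatment model limits
    (ps es : S → ℝ)
    (hps_meas : Measurable ps) (hes_meas : Measurable es)
    (hps_nonneg : ∀ x, 0 ≤ ps x) (hes_nonneg : ∀ x, 0 ≤ es x)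
    (hratio_bdd : ∃ M : ℝ, ∀ x : S, ps x / es x ≤ M) :
    ∫ ω, ({ω' | A ω' = a}.indicator (fun _ => (1 : ℝ)) ω)
          * (ps (X ω) / es (X ω)) * (Y ω - h (X ω) a) ∂P = 0 ∧
    ∫ ω, (({ω' | A ω' = a}.indicator (fun _ => (1 : ℝ)) ω)
            * (ps (X ω) / es (X ω)) * (Y ω - h (X ω) a)
          + ({ω' | C ω' = c}.indicator (fun _ => (1 : ℝ)) ω) * h (X ω) a) ∂P
      = (P {ω | C ω = c}).toReal * ∫ ω, h (X ω) a ∂(P[|{ω | C ω = c}]) := by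
  obtain ⟨M, hM⟩ := hratio_bdd
  set w : S × 𝒜 → ℝ := fun p => ({a} : Set 𝒜).indicator (fun _ => (1 : ℝ)) p.2 * (ps p.1 / es p.1)
  have hw : Measurable w := by fun_prop (disch := measurability)
  have hwK : ∀ p, ‖w p‖ ≤ max M 0 := fun p =>
    abs_indicator_one_mul_div_le hps_nonneg hes_nonneg hM p.2 p.1
  -- off `{A = a}` the weight vanishes, so `h_a(X)` may be replaced by `h_A(X)`
  have hresidual : ∀ ω, {ω' | A ω' = a}.indicator (fun _ => (1 : ℝ)) ω
      * (ps (X ω) / es (X ω)) * (Y ω - h (X ω) a) = w (X ω, A ω) * (Y ω - h (X ω) (A ω)) := by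
    intro ω
    by_cases hω : A ω = a <;> simp [w, hω]
  have hfirst := integral_comp_mul_sub_eq_zero_of_ae_eq_condExp_comap (hX.prodMk hA) hY hw hwK
    (g := fun p => h p.1 p.2) hh
  have hweighted_int := integrable_comp_mul_sub_of_ae_eq_condExp_comap (hX.prodMk hA) hY hw hwK
    (g := fun p => h p.1 p.2) hh
  simp_rw [← hresidual] at hfirst hweighted_int
  refine ⟨hfirst, ?_⟩
  have hsC : MeasurableSet {ω | C ω = c} := hC (measurableSet_singleton c)
  have haug_int : Integrable (fun ω => {ω' | C ω' = c}.indicator (fun _ => (1 : ℝ)) ω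
      * h (X ω) a) P :=
    (hhint.indicator hsC).congr <| .of_forall fun ω =>
      (Set.indicator_one_mul_apply _ (fun ω => h (X ω) a) ω).symm
  rw [integral_add hweighted_int haug_int, hfirst, zero_add,
    integral_indicator_one_mul_eq_measureReal_mul_integral_cond hsC (measure_ne_top P _),
    measureReal_def]

/-- Let `p*, e* : S → [0, ∞)` be measurable with `e*(X) > 0` almost
surely and `p*(X)/e*(X)` bounded. Then
`E[ 1{A = a} (p*(X)/e*(X)) (Y − h_a(X)) ] = 0`, and consequently
`E[ 1{A = a} (p*(X)/e*(X)) (Y − h_a(X)) + 1{C = c} h_a(X) ] = P[C = c] · ψ(c, a)`;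
when the outcome model is correctly specified, the asymptotic limit of the augmented
estimator for `ψ(c, a)` equals `ψ(c, a)` regardless of misspecification of the
participation and treatment models. -/
theorem augmented_estimator_psi_robust_to_weight_model_misspecification
    {Ω S 𝒜 : Type*} [MeasurableSpace Ω] [StandardBorelSpace Ω] [Nonempty Ω]
    [MeasurableSpace S] [StandardBorelSpace S]
    [MeasurableSpace 𝒜] [MeasurableSingletonClass 𝒜] [Fintype 𝒜]
    {m : ℕ}
    (P : Measure Ω) [IsProbabilityMeasure P]
    (X : Ω → S) (C : Ω → Fin m) (A : Ω → 𝒜) (Y : Ω → ℝ)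
    (hX : Measurable X) (hC : Measurable C) (hA : Measurable A)
    (hY : Integrable Y P)
    (hCpos : ∀ c' : Fin m, 0 < P {ω | C ω = c'})
    -- fixed center and treatment
    (c : Fin m) (a : 𝒜)
    -- h a x is a version of E[Y | X = x, A = a], with h_a(X) integrable
    (h : S → 𝒜 → ℝ)
    (hh : (fun ω => h (X ω) (A ω))
        =ᵐ[P] P[Y | MeasurableSpace.comap (fun ω => (X ω, A ω)) inferInstance])
    (hhint : Integrable (fun ω => h (X ω) a) P)
    -- possibly misspecified participation and treatment model limits
    (ps es : S → ℝ)
    (hps_meas : Measurable ps) (hes_meas : Measurable es)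
    (hps_nonneg : ∀ x, 0 ≤ ps x) (hes_nonneg : ∀ x, 0 ≤ es x)
    (hes_pos : ∀ᵐ ω ∂P, 0 < es (X ω))
    (hratio_bdd : ∃ M : ℝ, ∀ x : S, ps x / es x ≤ M) :
    ∫ ω, ({ω' | A ω' = a}.indicator (fun _ => (1 : ℝ)) ω)
          * (ps (X ω) / es (X ω)) * (Y ω - h (X ω) a) ∂P = 0 ∧
    ∫ ω, (({ω' | A ω' = a}.indicator (fun _ => (1 : ℝ)) ω)
            * (ps (X ω) / es (X ω)) * (Y ω - h (X ω) a)
          + ({ω' | C ω' = c}.indicator (fun _ => (1 : ℝ)) ω) * h (X ω) a) ∂P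
      = (P {ω | C ω = c}).toReal * ∫ ω, h (X ω) a ∂(P[|{ω | C ω = c}]) :=
  augmented_estimator_psi_robust_to_weight_model_misspecification_general P X C A Y hX hC hA hY c a
    h hh hhint ps es hps_meas hes_meas hps_nonneg hes_nonneg hratio_bdd
end

section
/- Assume e_a(X) = P[A = a | X] > 0 almost surely and suitable integrability. Define the influence function Ψ¹(c, a) = P[C = c]^{-1} · { 1{A = a} · p_c(X) · e_a(X)^{-1} · (Y − h_a(X)) + 1{C = c} · (h_a(X) − ψ(c, a)) }. Then E[Ψ¹(c, a)] = 0; moreover, the first summand 1{A = a} · p_c(X) · e_a(X)^{-1} · (Y − h_a(X)) has conditional expectation zero given σ(X, A) almost surely, and the second summand h_a(X) − ψ(c, a) has conditional expectation zero given the event {C = c}. -/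
/-!
The first summand is `w · (Y − E[Y | X, A])` for the `σ(X, A)`-measurable weight
`w = 1{A = a} p_c(X) e_a(X)⁻¹`. Pulling `w` out of the conditional expectation leaves
`E[Y − E[Y | X, A] | X, A] = 0`, and taking expectations gives mean zero. The second summand
integrates over `{C = c}` to `P[C = c]` times the conditional mean of `h_a(X) − ψ(c, a)`, which
vanishes by the definition of `ψ`.
-/

open MeasureTheory ProbabilityTheory

namespace MeasureTheory

variable {Ω : Type*} {m m₀ : MeasurableSpace Ω} {μ : Measure Ω}

theorem condExp_mul_sub_condExp_ae_eq_zero (hm : m ≤ m₀) [SigmaFinite (μ.trim hm)]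
    {w Y : Ω → ℝ} (hw : StronglyMeasurable[m] w) (hY : Integrable Y μ) :
    μ[w * (Y - μ[Y | m]) | m] =ᵐ[μ] 0 := by
  by_cases hwY : Integrable (w * (Y - μ[Y | m])) μ
  swap
  · rw [condExp_of_not_integrable hwY]
  have hcentered : μ[Y - μ[Y | m] | m] =ᵐ[μ] 0 := by
    filter_upwards [condExp_sub hY (integrable_condExp (m := m) (f := Y)) m,
      condExp_condExp_of_le le_rfl hm (f := Y)] with ω hsub hidem
    simp [hsub, hidem]
  filter_upwards [condExp_mul_of_stronglyMeasurable_left hw hwY (hY.sub integrable_condExp),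
    hcentered] with ω hpull hzero
  simp [hpull, hzero]

theorem integral_eq_zero_of_condExp_ae_eq_zero (hm : m ≤ m₀) [SigmaFinite (μ.trim hm)]
    {f : Ω → ℝ} (hf : μ[f | m] =ᵐ[μ] 0) : ∫ ω, f ω ∂μ = 0 := by
  rw [← integral_condExp hm, integral_congr_ae hf]
  simp

end MeasureTheory

theorem Set.indicator_one_mul_eq_indicator_s12 {α M : Type*} [MulZeroOneClass M] (s : Set α)
    (f : α → M) : (fun x => s.indicator (fun _ => (1 : M)) x * f x) = s.indicator f :=
  funext fun x => by simp_rw [← Set.indicator_mul_left, one_mul]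

namespace ProbabilityTheory

variable {Ω : Type*} [MeasurableSpace Ω] {μ : Measure Ω}

theorem setIntegral_eq_measureReal_mul_integral_cond [IsFiniteMeasure μ] (s : Set Ω)
    (f : Ω → ℝ) : ∫ ω in s, f ω ∂μ = μ.real s * ∫ ω, f ω ∂μ[|s] := by
  rw [cond, integral_smul_measure, ENNReal.toReal_inv, smul_eq_mul, ← mul_assoc]
  by_cases hs : μ s = 0
  · simp [Measure.restrict_eq_zero.mpr hs]
  · rw [← measureReal_def, mul_inv_cancel₀ ((measureReal_ne_zero_iff).mpr hs), one_mul]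

theorem integral_sub_integral_cond (s : Set Ω) (f : Ω → ℝ) :
    ∫ ω, (f ω - ∫ ω', f ω' ∂μ[|s]) ∂μ[|s] = 0 := by
  simpa [centralMoment] using centralMoment_one (X := f) (μ := μ[|s])

theorem integral_indicator_mul_sub_integral_cond [IsFiniteMeasure μ] {s : Set Ω}
    (hs : MeasurableSet s) (f : Ω → ℝ) :
    ∫ ω, s.indicator (fun _ => (1 : ℝ)) ω * (f ω - ∫ ω', f ω' ∂μ[|s]) ∂μ = 0 := by
  rw [Set.indicator_one_mul_eq_indicator_s12, integral_indicator hs,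
    setIntegral_eq_measureReal_mul_integral_cond, integral_sub_integral_cond, mul_zero]

end ProbabilityTheory

namespace MeasurableSpace

theorem comap_le_comap_prodMk_left {Ω β γ : Type*} [mβ : MeasurableSpace β]
    [mγ : MeasurableSpace γ] (X : Ω → β) (A : Ω → γ) :
    mβ.comap X ≤ (mβ.prod mγ).comap (fun ω => (X ω, A ω)) := by
  rw [MeasurableSpace.comap_prodMk]
  exact le_sup_left

theorem measurableSet_comap_prodMk_snd_eq {Ω β γ : Type*} [mβ : MeasurableSpace β]
    [mγ : MeasurableSpace γ] [MeasurableSingletonClass γ] (X : Ω → β) (A : Ω → γ) (a : γ) :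
    MeasurableSet[(mβ.prod mγ).comap (fun ω => (X ω, A ω))] {ω | A ω = a} :=
  ⟨Set.univ ×ˢ {a}, MeasurableSet.univ.prod (measurableSet_singleton a), by ext; simp⟩

end MeasurableSpace

section Treatment

open MeasurableSpace

variable {Ω S 𝒜 : Type*} [MeasurableSpace Ω] [MeasurableSpace S] [MeasurableSpace 𝒜]
  {P : Measure Ω} [IsFiniteMeasure P] {X : Ω → S} {A : Ω → 𝒜} {Y : Ω → ℝ}

theorem condExp_indicator_mul_mul_sub_ae_eq_zero [MeasurableSingletonClass 𝒜]
    (hX : Measurable X) (hA : Measurable A) (hY : Integrable Y P) {h : S → 𝒜 → ℝ}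
    (hh : (fun ω => h (X ω) (A ω))
        =ᵐ[P] P[Y | MeasurableSpace.comap (fun ω => (X ω, A ω)) inferInstance])
    (a : 𝒜) {g : S → ℝ} {g' : Ω → ℝ}
    (hg' : StronglyMeasurable[MeasurableSpace.comap X inferInstance] g')
    (hg : (fun ω => g (X ω)) =ᵐ[P] g') :
    P[(fun ω => {ω' | A ω' = a}.indicator (fun _ => (1 : ℝ)) ω * g (X ω) * (Y ω - h (X ω) a)) |
        MeasurableSpace.comap (fun ω => (X ω, A ω)) inferInstance] =ᵐ[P] 0 := by
  have hw : StronglyMeasurable[MeasurableSpace.comap (fun ω => (X ω, A ω)) inferInstance]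
      ({ω' | A ω' = a}.indicator (fun _ => (1 : ℝ)) * g') :=
    ((measurable_const.indicator (measurableSet_comap_prodMk_snd_eq X A a)).mul
      (hg'.mono (comap_le_comap_prodMk_left X A)).measurable).stronglyMeasurable
  refine (condExp_congr_ae ?_).trans
    (condExp_mul_sub_condExp_ae_eq_zero (hX.prodMk hA).comap_le hw hY)
  -- on `{A = a}` the version `h_a(X)` is `h_A(X)`, hence `E[Y | X, A]`
  filter_upwards [hh, hg] with ω hhω hgω
  by_cases hAω : A ω = a
  · simp [hAω, ← hhω, hgω]
  · simp [hAω]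

end Treatment

theorem influence_function_psi_mean_zero_general
    {Ω S 𝒜 : Type*} [MeasurableSpace Ω]
    [MeasurableSpace S]
    [MeasurableSpace 𝒜] [MeasurableSingletonClass 𝒜]
    {m : ℕ}
    (P : Measure Ω) [IsProbabilityMeasure P]
    (X : Ω → S) (C : Ω → Fin m) (A : Ω → 𝒜) (Y : Ω → ℝ)
    (hX : Measurable X) (hC : Measurable C) (hA : Measurable A)
    (hY : Integrable Y P)
    -- fixed center and treatment
    (c : Fin m) (a : 𝒜)
    -- h a x is a version of E[Y | X = x, A = a]
    (h : S → 𝒜 → ℝ)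
    (hh : (fun ω => h (X ω) (A ω))
        =ᵐ[P] P[Y | MeasurableSpace.comap (fun ω => (X ω, A ω)) inferInstance])
    -- e x is a version of P[A = a | X = x]
    (e : S → ℝ)
    (he : (fun ω => e (X ω))
        =ᵐ[P] P[({ω' | A ω' = a}.indicator (fun _ => (1 : ℝ))) |
            MeasurableSpace.comap X inferInstance])
    -- p x is a version of P[C = c | X = x]
    (p : S → ℝ)
    (hp : (fun ω => p (X ω))
        =ᵐ[P] P[({ω' | C ω' = c}.indicator (fun _ => (1 : ℝ))) |
            MeasurableSpace.comap X inferInstance])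
    -- suitable integrability
    (hhint : Integrable (fun ω => h (X ω) a) P)
    (hint : Integrable (fun ω =>
        ({ω' | A ω' = a}.indicator (fun _ => (1 : ℝ)) ω)
          * p (X ω) * (e (X ω))⁻¹ * (Y ω - h (X ω) a)) P)
    -- ψ(c, a) = E[ h_a(X) | C = c ]
    (ψ : ℝ) (hψ : ψ = ∫ ω, h (X ω) a ∂(P[|{ω | C ω = c}])) :
    -- E[Ψ¹(c, a)] = 0
    ∫ ω, ((P {ω' | C ω' = c}).toReal)⁻¹
          * (({ω' | A ω' = a}.indicator (fun _ => (1 : ℝ)) ω)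
                * p (X ω) * (e (X ω))⁻¹ * (Y ω - h (X ω) a)
              + ({ω' | C ω' = c}.indicator (fun _ => (1 : ℝ)) ω)
                * (h (X ω) a - ψ)) ∂P = 0 ∧
    -- the first summand has conditional expectation zero given σ(X, A)
    (P[(fun ω => ({ω' | A ω' = a}.indicator (fun _ => (1 : ℝ)) ω)
          * p (X ω) * (e (X ω))⁻¹ * (Y ω - h (X ω) a)) |
        MeasurableSpace.comap (fun ω => (X ω, A ω)) inferInstance]
      =ᵐ[P] 0) ∧
    -- the second summand has conditional expectation zero given the event {C = c}
    ∫ ω, (h (X ω) a - ψ) ∂(P[|{ω | C ω = c}]) = 0 := by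
  have hG_cond : ∫ ω, (h (X ω) a - ψ) ∂(P[|{ω | C ω = c}]) = 0 :=
    hψ ▸ integral_sub_integral_cond _ _
  have hCc : MeasurableSet {ω | C ω = c} := hC (measurableSet_singleton c)
  have hG_int : Integrable (fun ω => ({ω' | C ω' = c}.indicator (fun _ => (1 : ℝ)) ω)
      * (h (X ω) a - ψ)) P := by
    rw [Set.indicator_one_mul_eq_indicator_s12]
    exact (hhint.sub (integrable_const ψ)).indicator hCc
  have hF_condExp : P[(fun ω => ({ω' | A ω' = a}.indicator (fun _ => (1 : ℝ)) ω)
        * p (X ω) * (e (X ω))⁻¹ * (Y ω - h (X ω) a)) |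
      MeasurableSpace.comap (fun ω => (X ω, A ω)) inferInstance] =ᵐ[P] 0 := by
    simpa only [mul_assoc] using condExp_indicator_mul_mul_sub_ae_eq_zero hX hA hY hh a
      (g := fun x => p x * (e x)⁻¹) (stronglyMeasurable_condExp.measurable.mul
        stronglyMeasurable_condExp.measurable.inv).stronglyMeasurable (hp.mul he.inv)
  refine ⟨?_, hF_condExp, hG_cond⟩
  rw [integral_const_mul, integral_add hint hG_int,
    integral_eq_zero_of_condExp_ae_eq_zero (hX.prodMk hA).comap_le hF_condExp,
    hψ, integral_indicator_mul_sub_integral_cond hCc, add_zero, mul_zero]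

/-- Assume `e_a(X) = P[A = a | X] > 0` almost surely and suitable
integrability. The influence function
`Ψ¹(c, a) = P[C = c]⁻¹ { 1{A = a} p_c(X) e_a(X)⁻¹ (Y − h_a(X))
+ 1{C = c} (h_a(X) − ψ(c, a)) }` has mean zero; moreover its first summand has
conditional expectation zero given `σ(X, A)` almost surely, and its second summand
has conditional expectation zero given the event `{C = c}`. -/
theorem influence_function_psi_mean_zero
    {Ω S 𝒜 : Type*} [MeasurableSpace Ω] [StandardBorelSpace Ω] [Nonempty Ω]
    [MeasurableSpace S] [StandardBorelSpace S]
    [MeasurableSpace 𝒜] [MeasurableSingletonClass 𝒜] [Fintype 𝒜]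
    {m : ℕ}
    (P : Measure Ω) [IsProbabilityMeasure P]
    (X : Ω → S) (C : Ω → Fin m) (A : Ω → 𝒜) (Y : Ω → ℝ)
    (hX : Measurable X) (hC : Measurable C) (hA : Measurable A)
    (hY : Integrable Y P)
    (hCpos : ∀ c' : Fin m, 0 < P {ω | C ω = c'})
    -- fixed center and treatment
    (c : Fin m) (a : 𝒜)
    -- h a x is a version of E[Y | X = x, A = a]
    (h : S → 𝒜 → ℝ)
    (hh : (fun ω => h (X ω) (A ω))
        =ᵐ[P] P[Y | MeasurableSpace.comap (fun ω => (X ω, A ω)) inferInstance])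
    -- e x is a version of P[A = a | X = x]
    (e : S → ℝ)
    (he : (fun ω => e (X ω))
        =ᵐ[P] P[({ω' | A ω' = a}.indicator (fun _ => (1 : ℝ))) |
            MeasurableSpace.comap X inferInstance])
    (hepos : ∀ᵐ ω ∂P, 0 < e (X ω))
    -- p x is a version of P[C = c | X = x]
    (p : S → ℝ)
    (hp : (fun ω => p (X ω))
        =ᵐ[P] P[({ω' | C ω' = c}.indicator (fun _ => (1 : ℝ))) |
            MeasurableSpace.comap X inferInstance])
    -- suitable integrability
    (hhint : Integrable (fun ω => h (X ω) a) P)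
    (hint : Integrable (fun ω =>
        ({ω' | A ω' = a}.indicator (fun _ => (1 : ℝ)) ω)
          * p (X ω) * (e (X ω))⁻¹ * (Y ω - h (X ω) a)) P)
    -- ψ(c, a) = E[ h_a(X) | C = c ]
    (ψ : ℝ) (hψ : ψ = ∫ ω, h (X ω) a ∂(P[|{ω | C ω = c}])) :
    -- E[Ψ¹(c, a)] = 0
    ∫ ω, ((P {ω' | C ω' = c}).toReal)⁻¹
          * (({ω' | A ω' = a}.indicator (fun _ => (1 : ℝ)) ω)
                * p (X ω) * (e (X ω))⁻¹ * (Y ω - h (X ω) a)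
              + ({ω' | C ω' = c}.indicator (fun _ => (1 : ℝ)) ω)
                * (h (X ω) a - ψ)) ∂P = 0 ∧
    -- the first summand has conditional expectation zero given σ(X, A)
    (P[(fun ω => ({ω' | A ω' = a}.indicator (fun _ => (1 : ℝ)) ω)
          * p (X ω) * (e (X ω))⁻¹ * (Y ω - h (X ω) a)) |
        MeasurableSpace.comap (fun ω => (X ω, A ω)) inferInstance]
      =ᵐ[P] 0) ∧
    -- the second summand has conditional expectation zero given the event {C = c}
    ∫ ω, (h (X ω) a - ψ) ∂(P[|{ω | C ω = c}]) = 0 :=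
  influence_function_psi_mean_zero_general P X C A Y hX hC hA hY c a h hh e he p hp hhint hint ψ hψ
end
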